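/- Lemma 5.4: Let q and q'' be integral nonsingular ternary quadratic forms belonging to the same similarity class, with matrices Q, Q'' and associated quaternary forms n, n'' (matrices N, N''). Then q and q'' are integrally equivalent (i.e. ᵀU·Q·U = Q'' for some U ∈ GL₃(ℤ)) if and only if n and n'' are integrally equivalent (i.e. ᵀ𝒰·N·𝒰 = N'' for some 𝒰 ∈ GL₄(ℤ)). -/

import Mathlib

open Matrix

/-- An integral quadratic form encoded by its matrix: symmetric with even diagonal. -/
def IsIntegralQF {m : ℕ} (Q : Matrix (Fin m) (Fin m) ℤ) : Prop :=
  Q.IsSymm ∧ ∀ i, 2 ∣ Q i i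

/-- `R(q,q')`: integral representations. -/
def Reps {m n : ℕ} (Q : Matrix (Fin m) (Fin m) ℤ) (Q' : Matrix (Fin n) (Fin n) ℤ) :
    Set (Matrix (Fin m) (Fin n) ℤ) :=
  {A | Aᵀ * Q * A = Q'}

/-- `q'` is similar to `q`. -/
def SimilarQF {m : ℕ} (Q Q' : Matrix (Fin m) (Fin m) ℤ) : Prop :=
  Q'.det = Q.det ∧ ∃ a : ℤ, IsCoprime a Q.det ∧ (Reps Q (a • Q')).Nonempty

/-- The upper triangular matrix `Q₀` of a ternary form `q`, so that `Q = Q₀ + ᵀQ₀`. -/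
def upperHalf (Q : Matrix (Fin 3) (Fin 3) ℤ) : Matrix (Fin 3) (Fin 3) ℤ :=
  Matrix.of fun i j => if i < j then Q i j else if i = j then Q i i / 2 else 0

/-- The vector `B = ᵀ(−b₂₃, b₁₃, −b₁₂)`. -/
def Bvec (Q : Matrix (Fin 3) (Fin 3) ℤ) : Fin 3 → ℤ := ![-(Q 1 2), Q 0 2, -(Q 0 1)]

/-- The matrix `N` (5.12) of the associated quaternary quadratic form `n`. -/
def Nmat (Q : Matrix (Fin 3) (Fin 3) ℤ) : Matrix (Fin 4) (Fin 4) ℤ :=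
  Matrix.reindex finSumFinEquiv finSumFinEquiv
    (Matrix.fromBlocks
      (Matrix.of fun (_ : Fin 1) (_ : Fin 1) => (2 : ℤ))
      (Matrix.of fun (_ : Fin 1) j => -(Bvec Q j))
      (Matrix.of fun i (_ : Fin 1) => -(Bvec Q i))
      ((upperHalf Q).adjugateᵀ + (upperHalf Q).adjugate))

/-! ### Auxiliary machinery -/

set_option maxHeartbeats 4000000

theorem det_fin_four' (A : Matrix (Fin 4) (Fin 4) ℤ) : A.det =
    A 0 0 * (A 1 1 * (A 2 2 * A 3 3 - A 2 3 * A 3 2) - A 1 2 * (A 2 1 * A 3 3 - A 2 3 * A 3 1) + A 1 3 * (A 2 1 * A 3 2 - A 2 2 * A 3 1))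
  - A 0 1 * (A 1 0 * (A 2 2 * A 3 3 - A 2 3 * A 3 2) - A 1 2 * (A 2 0 * A 3 3 - A 2 3 * A 3 0) + A 1 3 * (A 2 0 * A 3 2 - A 2 2 * A 3 0))
  + A 0 2 * (A 1 0 * (A 2 1 * A 3 3 - A 2 3 * A 3 1) - A 1 1 * (A 2 0 * A 3 3 - A 2 3 * A 3 0) + A 1 3 * (A 2 0 * A 3 1 - A 2 1 * A 3 0))
  - A 0 3 * (A 1 0 * (A 2 1 * A 3 2 - A 2 2 * A 3 1) - A 1 1 * (A 2 0 * A 3 2 - A 2 2 * A 3 0) + A 1 2 * (A 2 0 * A 3 1 - A 2 1 * A 3 0)) := by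
  have h3 : (Fin.succ 2 : Fin 4) = 3 := rfl
  have h2 : (Fin.castSucc 2 : Fin 4) = 2 := rfl
  rw [Matrix.det_succ_row_zero]
  simp [Fin.sum_univ_succ, Matrix.det_fin_three, Fin.succAbove, h3, h2]
  ring

/-- The matrix `N` written explicitly in terms of the coefficients of the ternary form. -/
def NmatP (a b c d e f : ℤ) : Matrix (Fin 4) (Fin 4) ℤ :=
  !![2, f, -e, d;
     f, 2*(b*c), -(c*d), d*f - b*e;
     -e, -(c*d), 2*(a*c), -(a*f);
     d, d*f - b*e, -(a*f), 2*(a*b)]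

theorem upperHalf_lit (a b c d e f : ℤ) :
    upperHalf !![2*a, d, e; d, 2*b, f; e, f, 2*c] = !![a, d, e; 0, b, f; 0, 0, c] := by
  ext i j
  fin_cases i <;> fin_cases j <;>
    simp [upperHalf, Matrix.vecHead, Matrix.vecTail]

theorem eta_fin_four (A : Matrix (Fin 4) (Fin 4) ℤ) :
    A = !![A 0 0, A 0 1, A 0 2, A 0 3;
           A 1 0, A 1 1, A 1 2, A 1 3;
           A 2 0, A 2 1, A 2 2, A 2 3;
           A 3 0, A 3 1, A 3 2, A 3 3] := by
  ext i j
  fin_cases i <;> fin_cases j <;> rfl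

theorem reindex_blocks (x : ℤ) (B C : Fin 3 → ℤ) (D : Matrix (Fin 3) (Fin 3) ℤ) :
    (Matrix.reindex finSumFinEquiv finSumFinEquiv
      (Matrix.fromBlocks (Matrix.of fun (_ : Fin 1) (_ : Fin 1) => x)
        (Matrix.of fun (_ : Fin 1) j => B j) (Matrix.of fun i (_ : Fin 1) => C i) D)) =
    !![x, B 0, B 1, B 2;
       C 0, D 0 0, D 0 1, D 0 2;
       C 1, D 1 0, D 1 1, D 1 2;
       C 2, D 2 0, D 2 1, D 2 2] := by
  rw [eta_fin_four (Matrix.reindex _ _ _)]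
  rfl

theorem Nmat_lit (a b c d e f : ℤ) :
    Nmat !![2*a, d, e; d, 2*b, f; e, f, 2*c] = NmatP a b c d e f := by
  have hP : ((!![a, d, e; 0, b, f; 0, 0, c] : Matrix (Fin 3) (Fin 3) ℤ).adjugateᵀ
      + !![a, d, e; 0, b, f; 0, 0, c].adjugate) =
      !![2*(b*c), -(c*d), d*f - b*e; -(c*d), 2*(a*c), -(a*f); d*f - b*e, -(a*f), 2*(a*b)] := by
    rw [adjugate_fin_three_of]
    ext i j
    fin_cases i <;> fin_cases j <;>
      simp [Matrix.vecHead, Matrix.vecTail] <;> ring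
  rw [Nmat, upperHalf_lit, hP, reindex_blocks]
  ext i j
  fin_cases i <;> fin_cases j <;>
    simp [NmatP, Bvec, Matrix.vecHead, Matrix.vecTail] <;> ring

theorem mat3_ext (A B : Matrix (Fin 3) (Fin 3) ℤ)
    (h00 : A 0 0 = B 0 0) (h01 : A 0 1 = B 0 1) (h02 : A 0 2 = B 0 2)
    (h10 : A 1 0 = B 1 0) (h11 : A 1 1 = B 1 1) (h12 : A 1 2 = B 1 2)
    (h20 : A 2 0 = B 2 0) (h21 : A 2 1 = B 2 1) (h22 : A 2 2 = B 2 2) : A = B := by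
  ext i j
  fin_cases i <;> fin_cases j <;> assumption

theorem mat4_ext (A B : Matrix (Fin 4) (Fin 4) ℤ)
    (h00 : A 0 0 = B 0 0) (h01 : A 0 1 = B 0 1) (h02 : A 0 2 = B 0 2) (h03 : A 0 3 = B 0 3)
    (h10 : A 1 0 = B 1 0) (h11 : A 1 1 = B 1 1) (h12 : A 1 2 = B 1 2) (h13 : A 1 3 = B 1 3)
    (h20 : A 2 0 = B 2 0) (h21 : A 2 1 = B 2 1) (h22 : A 2 2 = B 2 2) (h23 : A 2 3 = B 2 3)
    (h30 : A 3 0 = B 3 0) (h31 : A 3 1 = B 3 1) (h32 : A 3 2 = B 3 2) (h33 : A 3 3 = B 3 3) :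
    A = B := by
  ext i j
  fin_cases i <;> fin_cases j <;> assumption

/-- Lemma 5.4: for similar ternary forms `q`, `q''`, integral equivalence of `q` and `q''`
is equivalent to integral equivalence of the associated quaternary forms `n`, `n''`. -/
theorem lemma_5_4 (Q Q'' : Matrix (Fin 3) (Fin 3) ℤ)
    (hQI : IsIntegralQF Q) (hQ''I : IsIntegralQF Q'')
    (hQns : Q.det ≠ 0) (hQ''ns : Q''.det ≠ 0)
    (hsim : SimilarQF Q Q'') :
    (∃ U : Matrix (Fin 3) (Fin 3) ℤ, IsUnit U.det ∧ Uᵀ * Q * U = Q'') ↔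
      (∃ V : Matrix (Fin 4) (Fin 4) ℤ, IsUnit V.det ∧ Vᵀ * Nmat Q * V = Nmat Q'') := by
  obtain ⟨hsym, heven⟩ := hQI
  obtain ⟨hsym', heven'⟩ := hQ''I
  obtain ⟨a, ha⟩ := heven 0
  obtain ⟨b, hb⟩ := heven 1
  obtain ⟨c, hc⟩ := heven 2
  obtain ⟨d, hd⟩ : ∃ x, Q 0 1 = x := ⟨_, rfl⟩
  obtain ⟨e, he⟩ : ∃ x, Q 0 2 = x := ⟨_, rfl⟩
  obtain ⟨f, hf⟩ : ∃ x, Q 1 2 = x := ⟨_, rfl⟩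
  obtain ⟨a', ha'⟩ := heven' 0
  obtain ⟨b', hb'⟩ := heven' 1
  obtain ⟨c', hc'⟩ := heven' 2
  obtain ⟨d', hd'⟩ : ∃ x, Q'' 0 1 = x := ⟨_, rfl⟩
  obtain ⟨e', he'⟩ : ∃ x, Q'' 0 2 = x := ⟨_, rfl⟩
  obtain ⟨f', hf'⟩ : ∃ x, Q'' 1 2 = x := ⟨_, rfl⟩
  have hQlit : Q = !![2*a, d, e; d, 2*b, f; e, f, 2*c] := by
    have s10 : Q 1 0 = Q 0 1 := hsym.apply 0 1
    have s20 : Q 2 0 = Q 0 2 := hsym.apply 0 2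
    have s21 : Q 2 1 = Q 1 2 := hsym.apply 1 2
    rw [Matrix.eta_fin_three Q, s10, s20, s21, ha, hb, hc, hd, he, hf]
  have hQlit' : Q'' = !![2*a', d', e'; d', 2*b', f'; e', f', 2*c'] := by
    have s10 : Q'' 1 0 = Q'' 0 1 := hsym'.apply 0 1
    have s20 : Q'' 2 0 = Q'' 0 2 := hsym'.apply 0 2
    have s21 : Q'' 2 1 = Q'' 1 2 := hsym'.apply 1 2
    rw [Matrix.eta_fin_three Q'', s10, s20, s21, ha', hb', hc', hd', he', hf']
  subst hQlit hQlit'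
  have hdet := hsim.1
  rw [Nmat_lit, Nmat_lit]
  constructor
  · rintro ⟨U, hU, hUQ⟩
    have e00 := congrFun (congrFun hUQ 0) 0
    have e11 := congrFun (congrFun hUQ 1) 1
    have e22 := congrFun (congrFun hUQ 2) 2
    have e01 := congrFun (congrFun hUQ 0) 1
    have e02 := congrFun (congrFun hUQ 0) 2
    have e12 := congrFun (congrFun hUQ 1) 2
    simp only [Matrix.mul_apply, Matrix.transpose_apply, Fin.sum_univ_three, Fin.isValue, Matrix.of_apply, Matrix.cons_val', Matrix.cons_val_zero, Matrix.cons_val_one, Matrix.cons_val_two, Matrix.cons_val_three, Matrix.head_cons, Matrix.tail_cons, Matrix.head_fin_const, Matrix.empty_val', Matrix.cons_val_fin_one, Nat.succ_eq_add_one, Nat.reduceAdd] at e00 e11 e22 e01 e02 e12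
    have sa : a' = a*(U 0 0)*(U 0 0) + b*(U 1 0)*(U 1 0) + c*(U 2 0)*(U 2 0) + d*(U 0 0)*(U 1 0) + e*(U 0 0)*(U 2 0) + f*(U 1 0)*(U 2 0) := by linarith
    have sb : b' = a*(U 0 1)*(U 0 1) + b*(U 1 1)*(U 1 1) + c*(U 2 1)*(U 2 1) + d*(U 0 1)*(U 1 1) + e*(U 0 1)*(U 2 1) + f*(U 1 1)*(U 2 1) := by linarith
    have sc : c' = a*(U 0 2)*(U 0 2) + b*(U 1 2)*(U 1 2) + c*(U 2 2)*(U 2 2) + d*(U 0 2)*(U 1 2) + e*(U 0 2)*(U 2 2) + f*(U 1 2)*(U 2 2) := by linarith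
    have sd : d' = 2*a*(U 0 0)*(U 0 1) + 2*b*(U 1 0)*(U 1 1) + 2*c*(U 2 0)*(U 2 1) + d*(U 0 0)*(U 1 1) + d*(U 0 1)*(U 1 0) + e*(U 0 0)*(U 2 1) + e*(U 0 1)*(U 2 0) + f*(U 1 0)*(U 2 1) + f*(U 1 1)*(U 2 0) := by linarith
    have se : e' = 2*a*(U 0 0)*(U 0 2) + 2*b*(U 1 0)*(U 1 2) + 2*c*(U 2 0)*(U 2 2) + d*(U 0 0)*(U 1 2) + d*(U 0 2)*(U 1 0) + e*(U 0 0)*(U 2 2) + e*(U 0 2)*(U 2 0) + f*(U 1 0)*(U 2 2) + f*(U 1 2)*(U 2 0) := by linarith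
    have sf : f' = 2*a*(U 0 1)*(U 0 2) + 2*b*(U 1 1)*(U 1 2) + 2*c*(U 2 1)*(U 2 2) + d*(U 0 1)*(U 1 2) + d*(U 0 2)*(U 1 1) + e*(U 0 1)*(U 2 2) + e*(U 0 2)*(U 2 1) + f*(U 1 1)*(U 2 2) + f*(U 1 2)*(U 2 1) := by linarith
    subst sa
    subst sb
    subst sc
    subst sd
    subst se
    subst sf
    refine ⟨!![1, a*(U 0 1)*(U 0 2) + b*(U 1 1)*(U 1 2) + c*(U 2 1)*(U 2 2) + d*(U 0 2)*(U 1 1) + e*(U 0 2)*(U 2 1) + f*(U 1 2)*(U 2 1), -a*(U 0 0)*(U 0 2) - b*(U 1 0)*(U 1 2) - c*(U 2 0)*(U 2 2) - d*(U 0 2)*(U 1 0) - e*(U 0 2)*(U 2 0) - f*(U 1 2)*(U 2 0), a*(U 0 0)*(U 0 1) + b*(U 1 0)*(U 1 1) + c*(U 2 0)*(U 2 1) + d*(U 0 1)*(U 1 0) + e*(U 0 1)*(U 2 0) + f*(U 1 1)*(U 2 0);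
        0, (U 1 1)*(U 2 2) - (U 1 2)*(U 2 1), -(U 1 0)*(U 2 2) + (U 1 2)*(U 2 0), (U 1 0)*(U 2 1) - (U 1 1)*(U 2 0);
        0, -(U 0 1)*(U 2 2) + (U 0 2)*(U 2 1), (U 0 0)*(U 2 2) - (U 0 2)*(U 2 0), -(U 0 0)*(U 2 1) + (U 0 1)*(U 2 0);
        0, (U 0 1)*(U 1 2) - (U 0 2)*(U 1 1), -(U 0 0)*(U 1 2) + (U 0 2)*(U 1 0), (U 0 0)*(U 1 1) - (U 0 1)*(U 1 0)], ?_, ?_⟩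
    · have hdv : Matrix.det !![1, a*(U 0 1)*(U 0 2) + b*(U 1 1)*(U 1 2) + c*(U 2 1)*(U 2 2) + d*(U 0 2)*(U 1 1) + e*(U 0 2)*(U 2 1) + f*(U 1 2)*(U 2 1), -a*(U 0 0)*(U 0 2) - b*(U 1 0)*(U 1 2) - c*(U 2 0)*(U 2 2) - d*(U 0 2)*(U 1 0) - e*(U 0 2)*(U 2 0) - f*(U 1 2)*(U 2 0), a*(U 0 0)*(U 0 1) + b*(U 1 0)*(U 1 1) + c*(U 2 0)*(U 2 1) + d*(U 0 1)*(U 1 0) + e*(U 0 1)*(U 2 0) + f*(U 1 1)*(U 2 0);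
        0, (U 1 1)*(U 2 2) - (U 1 2)*(U 2 1), -(U 1 0)*(U 2 2) + (U 1 2)*(U 2 0), (U 1 0)*(U 2 1) - (U 1 1)*(U 2 0);
        0, -(U 0 1)*(U 2 2) + (U 0 2)*(U 2 1), (U 0 0)*(U 2 2) - (U 0 2)*(U 2 0), -(U 0 0)*(U 2 1) + (U 0 1)*(U 2 0);
        0, (U 0 1)*(U 1 2) - (U 0 2)*(U 1 1), -(U 0 0)*(U 1 2) + (U 0 2)*(U 1 0), (U 0 0)*(U 1 1) - (U 0 1)*(U 1 0)] = U.det * U.det := by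
        rw [det_fin_four', Matrix.det_fin_three]
        simp only [Matrix.mul_apply, Matrix.transpose_apply, Fin.sum_univ_three, Fin.isValue, Matrix.of_apply, Matrix.cons_val', Matrix.cons_val_zero, Matrix.cons_val_one, Matrix.cons_val_two, Matrix.cons_val_three, Matrix.head_cons, Matrix.tail_cons, Matrix.head_fin_const, Matrix.empty_val', Matrix.cons_val_fin_one, Nat.succ_eq_add_one, Nat.reduceAdd]
        try ring
      rw [hdv]; exact hU.mul hU
    · refine mat4_ext _ _ ?_ ?_ ?_ ?_ ?_ ?_ ?_ ?_ ?_ ?_ ?_ ?_ ?_ ?_ ?_ ?_ <;>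
        (simp only [Matrix.mul_apply, Matrix.transpose_apply, Fin.sum_univ_four, NmatP, Fin.isValue, Matrix.of_apply, Matrix.cons_val', Matrix.cons_val_zero, Matrix.cons_val_one, Matrix.cons_val_two, Matrix.cons_val_three, Matrix.head_cons, Matrix.tail_cons, Matrix.head_fin_const, Matrix.empty_val', Matrix.cons_val_fin_one, Nat.succ_eq_add_one, Nat.reduceAdd]; try ring)
  · rintro ⟨V, hV, hVN⟩
    have e00 := congrFun (congrFun hVN 0) 0
    simp only [Matrix.mul_apply, Matrix.transpose_apply, Fin.sum_univ_four, NmatP, Fin.isValue, Matrix.of_apply, Matrix.cons_val', Matrix.cons_val_zero, Matrix.cons_val_one, Matrix.cons_val_two, Matrix.cons_val_three, Matrix.head_cons, Matrix.tail_cons, Matrix.head_fin_const, Matrix.empty_val', Matrix.cons_val_fin_one, Nat.succ_eq_add_one, Nat.reduceAdd] at e00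
    have hnv : a*b*(V 3 0)*(V 3 0) + a*c*(V 2 0)*(V 2 0) - a*f*(V 2 0)*(V 3 0) + b*c*(V 1 0)*(V 1 0) - b*e*(V 1 0)*(V 3 0) - c*d*(V 1 0)*(V 2 0) + d*f*(V 1 0)*(V 3 0) + d*(V 0 0)*(V 3 0) - e*(V 0 0)*(V 2 0) + f*(V 0 0)*(V 1 0) + (V 0 0)*(V 0 0) = 1 := by linarith
    set RB : Matrix (Fin 4) (Fin 4) ℤ :=
      !![d*(V 3 0) - e*(V 2 0) + f*(V 1 0) + (V 0 0), b*c*(V 1 0) - b*e*(V 3 0) - c*d*(V 2 0) + d*f*(V 3 0), a*c*(V 2 0) - a*f*(V 3 0), a*b*(V 3 0);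
        -(V 1 0), (V 0 0), a*(V 3 0), -a*(V 2 0);
        -(V 2 0), -b*(V 3 0), d*(V 3 0) + (V 0 0), b*(V 1 0) - d*(V 2 0);
        -(V 3 0), c*(V 2 0) - f*(V 3 0), -c*(V 1 0) + e*(V 3 0), -e*(V 2 0) + f*(V 1 0) + (V 0 0)] with hRBdef
    have hRb : RBᵀ * NmatP a b c d e f * RB = NmatP a b c d e f := by
      rw [hRBdef]
      refine mat4_ext _ _ ?_ ?_ ?_ ?_ ?_ ?_ ?_ ?_ ?_ ?_ ?_ ?_ ?_ ?_ ?_ ?_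
      · simp only [Matrix.mul_apply, Matrix.transpose_apply, Fin.sum_univ_four, NmatP, Fin.isValue, Matrix.of_apply, Matrix.cons_val', Matrix.cons_val_zero, Matrix.cons_val_one, Matrix.cons_val_two, Matrix.cons_val_three, Matrix.head_cons, Matrix.tail_cons, Matrix.head_fin_const, Matrix.empty_val', Matrix.cons_val_fin_one, Nat.succ_eq_add_one, Nat.reduceAdd]
        linear_combination (norm := ring1) (2) * hnv
      · simp only [Matrix.mul_apply, Matrix.transpose_apply, Fin.sum_univ_four, NmatP, Fin.isValue, Matrix.of_apply, Matrix.cons_val', Matrix.cons_val_zero, Matrix.cons_val_one, Matrix.cons_val_two, Matrix.cons_val_three, Matrix.head_cons, Matrix.tail_cons, Matrix.head_fin_const, Matrix.empty_val', Matrix.cons_val_fin_one, Nat.succ_eq_add_one, Nat.reduceAdd]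
        linear_combination (norm := ring1) (f) * hnv
      · simp only [Matrix.mul_apply, Matrix.transpose_apply, Fin.sum_univ_four, NmatP, Fin.isValue, Matrix.of_apply, Matrix.cons_val', Matrix.cons_val_zero, Matrix.cons_val_one, Matrix.cons_val_two, Matrix.cons_val_three, Matrix.head_cons, Matrix.tail_cons, Matrix.head_fin_const, Matrix.empty_val', Matrix.cons_val_fin_one, Nat.succ_eq_add_one, Nat.reduceAdd]
        linear_combination (norm := ring1) (-e) * hnv
      · simp only [Matrix.mul_apply, Matrix.transpose_apply, Fin.sum_univ_four, NmatP, Fin.isValue, Matrix.of_apply, Matrix.cons_val', Matrix.cons_val_zero, Matrix.cons_val_one, Matrix.cons_val_two, Matrix.cons_val_three, Matrix.head_cons, Matrix.tail_cons, Matrix.head_fin_const, Matrix.empty_val', Matrix.cons_val_fin_one, Nat.succ_eq_add_one, Nat.reduceAdd]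
        linear_combination (norm := ring1) (d) * hnv
      · simp only [Matrix.mul_apply, Matrix.transpose_apply, Fin.sum_univ_four, NmatP, Fin.isValue, Matrix.of_apply, Matrix.cons_val', Matrix.cons_val_zero, Matrix.cons_val_one, Matrix.cons_val_two, Matrix.cons_val_three, Matrix.head_cons, Matrix.tail_cons, Matrix.head_fin_const, Matrix.empty_val', Matrix.cons_val_fin_one, Nat.succ_eq_add_one, Nat.reduceAdd]
        linear_combination (norm := ring1) (f) * hnv
      · simp only [Matrix.mul_apply, Matrix.transpose_apply, Fin.sum_univ_four, NmatP, Fin.isValue, Matrix.of_apply, Matrix.cons_val', Matrix.cons_val_zero, Matrix.cons_val_one, Matrix.cons_val_two, Matrix.cons_val_three, Matrix.head_cons, Matrix.tail_cons, Matrix.head_fin_const, Matrix.empty_val', Matrix.cons_val_fin_one, Nat.succ_eq_add_one, Nat.reduceAdd]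
        linear_combination (norm := ring1) (2*b*c) * hnv
      · simp only [Matrix.mul_apply, Matrix.transpose_apply, Fin.sum_univ_four, NmatP, Fin.isValue, Matrix.of_apply, Matrix.cons_val', Matrix.cons_val_zero, Matrix.cons_val_one, Matrix.cons_val_two, Matrix.cons_val_three, Matrix.head_cons, Matrix.tail_cons, Matrix.head_fin_const, Matrix.empty_val', Matrix.cons_val_fin_one, Nat.succ_eq_add_one, Nat.reduceAdd]
        linear_combination (norm := ring1) (-c*d) * hnv
      · simp only [Matrix.mul_apply, Matrix.transpose_apply, Fin.sum_univ_four, NmatP, Fin.isValue, Matrix.of_apply, Matrix.cons_val', Matrix.cons_val_zero, Matrix.cons_val_one, Matrix.cons_val_two, Matrix.cons_val_three, Matrix.head_cons, Matrix.tail_cons, Matrix.head_fin_const, Matrix.empty_val', Matrix.cons_val_fin_one, Nat.succ_eq_add_one, Nat.reduceAdd]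
        linear_combination (norm := ring1) (-b*e + d*f) * hnv
      · simp only [Matrix.mul_apply, Matrix.transpose_apply, Fin.sum_univ_four, NmatP, Fin.isValue, Matrix.of_apply, Matrix.cons_val', Matrix.cons_val_zero, Matrix.cons_val_one, Matrix.cons_val_two, Matrix.cons_val_three, Matrix.head_cons, Matrix.tail_cons, Matrix.head_fin_const, Matrix.empty_val', Matrix.cons_val_fin_one, Nat.succ_eq_add_one, Nat.reduceAdd]
        linear_combination (norm := ring1) (-e) * hnv
      · simp only [Matrix.mul_apply, Matrix.transpose_apply, Fin.sum_univ_four, NmatP, Fin.isValue, Matrix.of_apply, Matrix.cons_val', Matrix.cons_val_zero, Matrix.cons_val_one, Matrix.cons_val_two, Matrix.cons_val_three, Matrix.head_cons, Matrix.tail_cons, Matrix.head_fin_const, Matrix.empty_val', Matrix.cons_val_fin_one, Nat.succ_eq_add_one, Nat.reduceAdd]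
        linear_combination (norm := ring1) (-c*d) * hnv
      · simp only [Matrix.mul_apply, Matrix.transpose_apply, Fin.sum_univ_four, NmatP, Fin.isValue, Matrix.of_apply, Matrix.cons_val', Matrix.cons_val_zero, Matrix.cons_val_one, Matrix.cons_val_two, Matrix.cons_val_three, Matrix.head_cons, Matrix.tail_cons, Matrix.head_fin_const, Matrix.empty_val', Matrix.cons_val_fin_one, Nat.succ_eq_add_one, Nat.reduceAdd]
        linear_combination (norm := ring1) (2*a*c) * hnv
      · simp only [Matrix.mul_apply, Matrix.transpose_apply, Fin.sum_univ_four, NmatP, Fin.isValue, Matrix.of_apply, Matrix.cons_val', Matrix.cons_val_zero, Matrix.cons_val_one, Matrix.cons_val_two, Matrix.cons_val_three, Matrix.head_cons, Matrix.tail_cons, Matrix.head_fin_const, Matrix.empty_val', Matrix.cons_val_fin_one, Nat.succ_eq_add_one, Nat.reduceAdd]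
        linear_combination (norm := ring1) (-a*f) * hnv
      · simp only [Matrix.mul_apply, Matrix.transpose_apply, Fin.sum_univ_four, NmatP, Fin.isValue, Matrix.of_apply, Matrix.cons_val', Matrix.cons_val_zero, Matrix.cons_val_one, Matrix.cons_val_two, Matrix.cons_val_three, Matrix.head_cons, Matrix.tail_cons, Matrix.head_fin_const, Matrix.empty_val', Matrix.cons_val_fin_one, Nat.succ_eq_add_one, Nat.reduceAdd]
        linear_combination (norm := ring1) (d) * hnv
      · simp only [Matrix.mul_apply, Matrix.transpose_apply, Fin.sum_univ_four, NmatP, Fin.isValue, Matrix.of_apply, Matrix.cons_val', Matrix.cons_val_zero, Matrix.cons_val_one, Matrix.cons_val_two, Matrix.cons_val_three, Matrix.head_cons, Matrix.tail_cons, Matrix.head_fin_const, Matrix.empty_val', Matrix.cons_val_fin_one, Nat.succ_eq_add_one, Nat.reduceAdd]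
        linear_combination (norm := ring1) (-b*e + d*f) * hnv
      · simp only [Matrix.mul_apply, Matrix.transpose_apply, Fin.sum_univ_four, NmatP, Fin.isValue, Matrix.of_apply, Matrix.cons_val', Matrix.cons_val_zero, Matrix.cons_val_one, Matrix.cons_val_two, Matrix.cons_val_three, Matrix.head_cons, Matrix.tail_cons, Matrix.head_fin_const, Matrix.empty_val', Matrix.cons_val_fin_one, Nat.succ_eq_add_one, Nat.reduceAdd]
        linear_combination (norm := ring1) (-a*f) * hnv
      · simp only [Matrix.mul_apply, Matrix.transpose_apply, Fin.sum_univ_four, NmatP, Fin.isValue, Matrix.of_apply, Matrix.cons_val', Matrix.cons_val_zero, Matrix.cons_val_one, Matrix.cons_val_two, Matrix.cons_val_three, Matrix.head_cons, Matrix.tail_cons, Matrix.head_fin_const, Matrix.empty_val', Matrix.cons_val_fin_one, Nat.succ_eq_add_one, Nat.reduceAdd]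
        linear_combination (norm := ring1) (2*a*b) * hnv
    have hdRB : RB.det = 1 := by
      rw [hRBdef, det_fin_four']
      simp only [Matrix.mul_apply, Matrix.transpose_apply, Fin.sum_univ_four, NmatP, Fin.isValue, Matrix.of_apply, Matrix.cons_val', Matrix.cons_val_zero, Matrix.cons_val_one, Matrix.cons_val_two, Matrix.cons_val_three, Matrix.head_cons, Matrix.tail_cons, Matrix.head_fin_const, Matrix.empty_val', Matrix.cons_val_fin_one, Nat.succ_eq_add_one, Nat.reduceAdd]
      linear_combination (norm := ring1) ((a*b*(V 3 0)*(V 3 0) + a*c*(V 2 0)*(V 2 0) - a*f*(V 2 0)*(V 3 0) + b*c*(V 1 0)*(V 1 0) - b*e*(V 1 0)*(V 3 0) - c*d*(V 1 0)*(V 2 0) + d*f*(V 1 0)*(V 3 0) + d*(V 0 0)*(V 3 0) - e*(V 0 0)*(V 2 0) + f*(V 0 0)*(V 1 0) + (V 0 0)*(V 0 0)) + 1) * hnv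
    set W : Matrix (Fin 4) (Fin 4) ℤ := RB * V with hWdef
    have hWN : Wᵀ * NmatP a b c d e f * W = NmatP a' b' c' d' e' f' := by
      have h1 : Wᵀ * NmatP a b c d e f * W
          = Vᵀ * (RBᵀ * NmatP a b c d e f * RB) * V := by
        rw [hWdef, Matrix.transpose_mul]; simp only [Matrix.mul_assoc]
      rw [h1, hRb, hVN]
    have hw00 : W 0 0 = 1 := by
      rw [hWdef, hRBdef]
      simp only [Matrix.mul_apply, Matrix.transpose_apply, Fin.sum_univ_four, NmatP, Fin.isValue, Matrix.of_apply, Matrix.cons_val', Matrix.cons_val_zero, Matrix.cons_val_one, Matrix.cons_val_two, Matrix.cons_val_three, Matrix.head_cons, Matrix.tail_cons, Matrix.head_fin_const, Matrix.empty_val', Matrix.cons_val_fin_one, Nat.succ_eq_add_one, Nat.reduceAdd]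
      linear_combination (norm := ring1) hnv
    have hw10 : W 1 0 = 0 := by
      rw [hWdef, hRBdef]; simp only [Matrix.mul_apply, Matrix.transpose_apply, Fin.sum_univ_four, NmatP, Fin.isValue, Matrix.of_apply, Matrix.cons_val', Matrix.cons_val_zero, Matrix.cons_val_one, Matrix.cons_val_two, Matrix.cons_val_three, Matrix.head_cons, Matrix.tail_cons, Matrix.head_fin_const, Matrix.empty_val', Matrix.cons_val_fin_one, Nat.succ_eq_add_one, Nat.reduceAdd]; try ring
    have hw20 : W 2 0 = 0 := by
      rw [hWdef, hRBdef]; simp only [Matrix.mul_apply, Matrix.transpose_apply, Fin.sum_univ_four, NmatP, Fin.isValue, Matrix.of_apply, Matrix.cons_val', Matrix.cons_val_zero, Matrix.cons_val_one, Matrix.cons_val_two, Matrix.cons_val_three, Matrix.head_cons, Matrix.tail_cons, Matrix.head_fin_const, Matrix.empty_val', Matrix.cons_val_fin_one, Nat.succ_eq_add_one, Nat.reduceAdd]; try ring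
    have hw30 : W 3 0 = 0 := by
      rw [hWdef, hRBdef]; simp only [Matrix.mul_apply, Matrix.transpose_apply, Fin.sum_univ_four, NmatP, Fin.isValue, Matrix.of_apply, Matrix.cons_val', Matrix.cons_val_zero, Matrix.cons_val_one, Matrix.cons_val_two, Matrix.cons_val_three, Matrix.head_cons, Matrix.tail_cons, Matrix.head_fin_const, Matrix.empty_val', Matrix.cons_val_fin_one, Nat.succ_eq_add_one, Nat.reduceAdd]; try ring
    have E01 := congrFun (congrFun hWN 0) 1
    have E02 := congrFun (congrFun hWN 0) 2
    have E03 := congrFun (congrFun hWN 0) 3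
    have E11 := congrFun (congrFun hWN 1) 1
    have E12 := congrFun (congrFun hWN 1) 2
    have E13 := congrFun (congrFun hWN 1) 3
    have E21 := congrFun (congrFun hWN 2) 1
    have E22 := congrFun (congrFun hWN 2) 2
    have E23 := congrFun (congrFun hWN 2) 3
    have E31 := congrFun (congrFun hWN 3) 1
    have E32 := congrFun (congrFun hWN 3) 2
    have E33 := congrFun (congrFun hWN 3) 3
    simp only [Matrix.mul_apply, Matrix.transpose_apply, Fin.sum_univ_four, NmatP, Fin.isValue, Matrix.of_apply, Matrix.cons_val', Matrix.cons_val_zero, Matrix.cons_val_one, Matrix.cons_val_two, Matrix.cons_val_three, Matrix.head_cons, Matrix.tail_cons, Matrix.head_fin_const, Matrix.empty_val', Matrix.cons_val_fin_one, Nat.succ_eq_add_one, Nat.reduceAdd, hw00, hw10, hw20, hw30] at E01 E02 E03 E11 E12 E13 E21 E22 E23 E31 E32 E33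
    set W3 : Matrix (Fin 3) (Fin 3) ℤ :=
      !![W 1 1, W 1 2, W 1 3; W 2 1, W 2 2, W 2 3; W 3 1, W 3 2, W 3 3] with hW3def
    have hG : W3ᵀ * (!![2*a, d, e; d, 2*b, f; e, f, 2*c] : Matrix (Fin 3) (Fin 3) ℤ).adjugate * W3
        = (!![2*a', d', e'; d', 2*b', f'; e', f', 2*c'] : Matrix (Fin 3) (Fin 3) ℤ).adjugate := by
      rw [adjugate_fin_three_of, adjugate_fin_three_of, hW3def]
      refine mat3_ext _ _ ?_ ?_ ?_ ?_ ?_ ?_ ?_ ?_ ?_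
      · simp only [Matrix.mul_apply, Matrix.transpose_apply, Fin.sum_univ_three, Fin.isValue, Matrix.of_apply, Matrix.cons_val', Matrix.cons_val_zero, Matrix.cons_val_one, Matrix.cons_val_two, Matrix.cons_val_three, Matrix.head_cons, Matrix.tail_cons, Matrix.head_fin_const, Matrix.empty_val', Matrix.cons_val_fin_one, Nat.succ_eq_add_one, Nat.reduceAdd]
        linear_combination (norm := ring1) 2*E11 - (2*(W 0 1) + f*(W 1 1) - e*(W 2 1) + d*(W 3 1))*E01 - (f')*E01
      · simp only [Matrix.mul_apply, Matrix.transpose_apply, Fin.sum_univ_three, Fin.isValue, Matrix.of_apply, Matrix.cons_val', Matrix.cons_val_zero, Matrix.cons_val_one, Matrix.cons_val_two, Matrix.cons_val_three, Matrix.head_cons, Matrix.tail_cons, Matrix.head_fin_const, Matrix.empty_val', Matrix.cons_val_fin_one, Nat.succ_eq_add_one, Nat.reduceAdd]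
        linear_combination (norm := ring1) 2*E12 - (2*(W 0 1) + f*(W 1 1) - e*(W 2 1) + d*(W 3 1))*E02 - (-e')*E01
      · simp only [Matrix.mul_apply, Matrix.transpose_apply, Fin.sum_univ_three, Fin.isValue, Matrix.of_apply, Matrix.cons_val', Matrix.cons_val_zero, Matrix.cons_val_one, Matrix.cons_val_two, Matrix.cons_val_three, Matrix.head_cons, Matrix.tail_cons, Matrix.head_fin_const, Matrix.empty_val', Matrix.cons_val_fin_one, Nat.succ_eq_add_one, Nat.reduceAdd]
        linear_combination (norm := ring1) 2*E13 - (2*(W 0 1) + f*(W 1 1) - e*(W 2 1) + d*(W 3 1))*E03 - (d')*E01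
      · simp only [Matrix.mul_apply, Matrix.transpose_apply, Fin.sum_univ_three, Fin.isValue, Matrix.of_apply, Matrix.cons_val', Matrix.cons_val_zero, Matrix.cons_val_one, Matrix.cons_val_two, Matrix.cons_val_three, Matrix.head_cons, Matrix.tail_cons, Matrix.head_fin_const, Matrix.empty_val', Matrix.cons_val_fin_one, Nat.succ_eq_add_one, Nat.reduceAdd]
        linear_combination (norm := ring1) 2*E21 - (2*(W 0 2) + f*(W 1 2) - e*(W 2 2) + d*(W 3 2))*E01 - (f')*E02
      · simp only [Matrix.mul_apply, Matrix.transpose_apply, Fin.sum_univ_three, Fin.isValue, Matrix.of_apply, Matrix.cons_val', Matrix.cons_val_zero, Matrix.cons_val_one, Matrix.cons_val_two, Matrix.cons_val_three, Matrix.head_cons, Matrix.tail_cons, Matrix.head_fin_const, Matrix.empty_val', Matrix.cons_val_fin_one, Nat.succ_eq_add_one, Nat.reduceAdd]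
        linear_combination (norm := ring1) 2*E22 - (2*(W 0 2) + f*(W 1 2) - e*(W 2 2) + d*(W 3 2))*E02 - (-e')*E02
      · simp only [Matrix.mul_apply, Matrix.transpose_apply, Fin.sum_univ_three, Fin.isValue, Matrix.of_apply, Matrix.cons_val', Matrix.cons_val_zero, Matrix.cons_val_one, Matrix.cons_val_two, Matrix.cons_val_three, Matrix.head_cons, Matrix.tail_cons, Matrix.head_fin_const, Matrix.empty_val', Matrix.cons_val_fin_one, Nat.succ_eq_add_one, Nat.reduceAdd]
        linear_combination (norm := ring1) 2*E23 - (2*(W 0 2) + f*(W 1 2) - e*(W 2 2) + d*(W 3 2))*E03 - (d')*E02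
      · simp only [Matrix.mul_apply, Matrix.transpose_apply, Fin.sum_univ_three, Fin.isValue, Matrix.of_apply, Matrix.cons_val', Matrix.cons_val_zero, Matrix.cons_val_one, Matrix.cons_val_two, Matrix.cons_val_three, Matrix.head_cons, Matrix.tail_cons, Matrix.head_fin_const, Matrix.empty_val', Matrix.cons_val_fin_one, Nat.succ_eq_add_one, Nat.reduceAdd]
        linear_combination (norm := ring1) 2*E31 - (2*(W 0 3) + f*(W 1 3) - e*(W 2 3) + d*(W 3 3))*E01 - (f')*E03
      · simp only [Matrix.mul_apply, Matrix.transpose_apply, Fin.sum_univ_three, Fin.isValue, Matrix.of_apply, Matrix.cons_val', Matrix.cons_val_zero, Matrix.cons_val_one, Matrix.cons_val_two, Matrix.cons_val_three, Matrix.head_cons, Matrix.tail_cons, Matrix.head_fin_const, Matrix.empty_val', Matrix.cons_val_fin_one, Nat.succ_eq_add_one, Nat.reduceAdd]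
        linear_combination (norm := ring1) 2*E32 - (2*(W 0 3) + f*(W 1 3) - e*(W 2 3) + d*(W 3 3))*E02 - (-e')*E03
      · simp only [Matrix.mul_apply, Matrix.transpose_apply, Fin.sum_univ_three, Fin.isValue, Matrix.of_apply, Matrix.cons_val', Matrix.cons_val_zero, Matrix.cons_val_one, Matrix.cons_val_two, Matrix.cons_val_three, Matrix.head_cons, Matrix.tail_cons, Matrix.head_fin_const, Matrix.empty_val', Matrix.cons_val_fin_one, Nat.succ_eq_add_one, Nat.reduceAdd]
        linear_combination (norm := ring1) 2*E33 - (2*(W 0 3) + f*(W 1 3) - e*(W 2 3) + d*(W 3 3))*E03 - (d')*E03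
    have hdW3 : W3.det = V.det := by
      have h1 : W.det = V.det := by rw [hWdef, Matrix.det_mul, hdRB, one_mul]
      rw [← h1, hW3def, det_fin_four' W, Matrix.det_fin_three, hw00, hw10, hw20, hw30]
      simp only [Matrix.mul_apply, Matrix.transpose_apply, Fin.sum_univ_three, Fin.isValue, Matrix.of_apply, Matrix.cons_val', Matrix.cons_val_zero, Matrix.cons_val_one, Matrix.cons_val_two, Matrix.cons_val_three, Matrix.head_cons, Matrix.tail_cons, Matrix.head_fin_const, Matrix.empty_val', Matrix.cons_val_fin_one, Nat.succ_eq_add_one, Nat.reduceAdd]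
      try ring
    have hGadj := congrArg Matrix.adjugate hG
    rw [Matrix.adjugate_mul_distrib, Matrix.adjugate_mul_distrib,
      Matrix.adjugate_adjugate _ (by simp), Matrix.adjugate_adjugate _ (by simp),
      ← Matrix.adjugate_transpose] at hGadj
    simp only [Fintype.card_fin, Nat.reduceSub, pow_one] at hGadj
    rw [hdet] at hGadj
    rw [Matrix.smul_mul, Matrix.mul_smul, ← Matrix.mul_assoc] at hGadj
    refine ⟨(W3.adjugate)ᵀ, ?_, ?_⟩
    · rw [Matrix.det_transpose, Matrix.det_adjugate, hdW3]
      simp only [Fintype.card_fin, Nat.reduceSub]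
      exact hV.pow 2
    · rw [Matrix.transpose_transpose]
      exact smul_right_injective (Matrix (Fin 3) (Fin 3) ℤ) hQns hGadj
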